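/- Let Ω⁰ = ℝ² × (−d, 0) and suppose f : closure(Ω⁰) → ℝ³ is continuous, C² in Ω⁰, bounded, Λ-periodic in the horizontal variables, satisfies ∇×f = 0 and ∇·f = 0 in Ω⁰, f₃ = 0 on the boundary {x₃ = 0} ∪ {x₃ = −d}, is (+)-symmetric, and has zero mean of f₁ over a fundamental domain. Then f ≡ 0. -/

import Mathlib

set_option maxHeartbeats 1600000


open Matrix MeasureTheory

noncomputable def pd (i : Fin 3) (f : (Fin 3 → ℝ) → ℝ) (x : Fin 3 → ℝ) : ℝ :=
  fderiv ℝ f x (Pi.single i 1)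

noncomputable def curl (u : (Fin 3 → ℝ) → Fin 3 → ℝ) (x : Fin 3 → ℝ) : Fin 3 → ℝ :=
  ![pd 1 (fun y => u y 2) x - pd 2 (fun y => u y 1) x,
    pd 2 (fun y => u y 0) x - pd 0 (fun y => u y 2) x,
    pd 0 (fun y => u y 1) x - pd 1 (fun y => u y 0) x]

/-- Reflection of the first coordinate. -/
def refl1 (x : Fin 3 → ℝ) : Fin 3 → ℝ := ![-x 0, x 1, x 2]

/-- Reflection of the second coordinate. -/
def refl2 (x : Fin 3 → ℝ) : Fin 3 → ℝ := ![x 0, -x 1, x 2]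

/-- The flattened layer `Ω⁰ = ℝ² × (−d, 0)`. -/
def layer (d : ℝ) : Set (Fin 3 → ℝ) := {x | -d < x 2 ∧ x 2 < 0}


open Filter

lemma isOpen_layer (d : ℝ) : IsOpen (layer d) := by
  have : layer d = (fun x : Fin 3 → ℝ => x 2) ⁻¹' Set.Ioo (-d) 0 := rfl
  rw [this]
  exact (isOpen_Ioo).preimage (continuous_apply 2)

lemma closure_layer_subset (d : ℝ) :
    closure (layer d) ⊆ {x | -d ≤ x 2 ∧ x 2 ≤ 0} := by
  apply closure_minimal
  · intro x hx; exact ⟨hx.1.le, hx.2.le⟩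
  · have : {x : Fin 3 → ℝ | -d ≤ x 2 ∧ x 2 ≤ 0} =
      (fun x : Fin 3 → ℝ => x 2) ⁻¹' Set.Icc (-d) 0 := rfl
    rw [this]
    exact isClosed_Icc.preimage (continuous_apply 2)

lemma mem_closure_layer {d : ℝ} (hd : 0 < d) {x : Fin 3 → ℝ}
    (h1 : -d ≤ x 2) (h2 : x 2 ≤ 0) : x ∈ closure (layer d) := by
  have hγ : Filter.Tendsto (fun t : ℝ => x + (t * (-(d/2) - x 2)) • (Pi.single 2 1 : Fin 3 → ℝ))
      (nhdsWithin 0 (Set.Ioo (0:ℝ) 1)) (nhds x) := by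
    have hc : Continuous (fun t : ℝ => x + (t * (-(d/2) - x 2)) • (Pi.single 2 1 : Fin 3 → ℝ)) := by
      continuity
    have := hc.tendsto 0
    simpa using this.mono_left nhdsWithin_le_nhds
  haveI : (nhdsWithin (0:ℝ) (Set.Ioo 0 1)).NeBot := by
    refine mem_closure_iff_nhdsWithin_neBot.mp ?_
    rw [closure_Ioo one_ne_zero.symm]
    exact ⟨le_refl 0, zero_le_one⟩
  refine mem_closure_of_tendsto hγ ?_
  filter_upwards [self_mem_nhdsWithin] with t ht
  have ht0 : 0 < t := ht.1
  have ht1 : t < 1 := ht.2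
  have hcoord : (x + (t * (-(d/2) - x 2)) • (Pi.single 2 1 : Fin 3 → ℝ)) 2
      = (1 - t) * x 2 + t * (-(d/2)) := by
    simp [Pi.single_apply]; ring
  constructor
  · rw [hcoord]
    nlinarith
  · rw [hcoord]
    nlinarith
lemma second_deriv_test {ψ ψ' : ℝ → ℝ} {a : ℝ}
    (hψ : ∀ᶠ t in nhds (0:ℝ), HasDerivAt ψ (ψ' t) t)
    (h'' : HasDerivAt ψ' a 0)
    (hmax : IsLocalMax ψ 0) : a ≤ 0 := by
  by_contra hpos
  push_neg at hpos
  have h0 : ψ' 0 = 0 := by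
    have h1 := hmax.deriv_eq_zero
    have h2 : HasDerivAt ψ (ψ' 0) 0 := hψ.self_of_nhds
    rw [h2.deriv] at h1; exact h1
  have hslope : Tendsto (slope ψ' 0) (nhdsWithin 0 {(0:ℝ)}ᶜ) (nhds a) := by
    have := h''.hasDerivWithinAt (s := {(0:ℝ)}ᶜ)
    rw [hasDerivWithinAt_iff_tendsto_slope] at this
    simpa [Set.diff_eq] using this
  have hev : ∀ᶠ t in nhds (0:ℝ), t ∈ ({(0:ℝ)}ᶜ) → 0 < slope ψ' 0 t :=
    eventually_nhdsWithin_iff.mp (hslope.eventually (eventually_gt_nhds hpos))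
  have hmax' : ∀ᶠ t in nhds (0:ℝ), ψ t ≤ ψ 0 := hmax
  obtain ⟨δ, hδ, hall⟩ := Metric.eventually_nhds_iff.mp ((hψ.and hev).and hmax')
  set s := δ/2 with hs
  have hs0 : 0 < s := by positivity
  have hsδ : s < δ := by simp [hs]; linarith
  have hmem : ∀ t ∈ Set.Icc (0:ℝ) s, dist t 0 < δ := by
    intro t ht
    rw [Real.dist_eq, sub_zero, abs_of_nonneg ht.1]
    exact lt_of_le_of_lt ht.2 hsδ
  have hcont : ContinuousOn ψ (Set.Icc 0 s) := fun t ht =>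
    ((hall (hmem t ht)).1.1.continuousAt).continuousWithinAt
  have hderiv : ∀ t ∈ interior (Set.Icc (0:ℝ) s), 0 < deriv ψ t := by
    intro t ht
    rw [interior_Icc] at ht
    have hd : dist t 0 < δ := hmem t ⟨ht.1.le, ht.2.le⟩
    have h1 : HasDerivAt ψ (ψ' t) t := (hall hd).1.1
    rw [h1.deriv]
    have h2 : 0 < (ψ' t - ψ' 0) / (t - 0) := by simpa [slope_def_field] using (hall hd).1.2 (ne_of_gt ht.1)
    rw [h0, sub_zero, sub_zero] at h2
    have := mul_pos h2 ht.1
    rwa [div_mul_cancel₀ _ (ne_of_gt ht.1)] at this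
  have hmono := strictMonoOn_of_deriv_pos (convex_Icc 0 s) hcont hderiv
  have h1 : ψ 0 < ψ s := hmono ⟨le_refl 0, hs0.le⟩ ⟨hs0.le, le_refl s⟩ hs0
  have h2 : ψ s ≤ ψ 0 := (hall (by rw [Real.dist_eq, sub_zero, abs_of_nonneg hs0.le]; exact hsδ)).2
  linarith
lemma per_shift {h : (Fin 3 → ℝ) → ℝ} {i : Fin 3} {lam : ℝ}
    (hper : ∀ x, h (x + Pi.single i lam) = h x) (n : ℤ) (x : Fin 3 → ℝ) :
    h (x + Pi.single i ((n:ℝ) * lam)) = h x := by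
  induction n using Int.induction_on with
  | zero => simp
  | succ k ih =>
    have e : (((k:ℤ)+1 : ℤ):ℝ) * lam = (k:ℝ)*lam + lam := by push_cast; ring
    rw [e, Pi.single_add, ← add_assoc, hper]
    simpa using ih
  | pred k ih =>
    have e : ((-(k:ℤ)-1 : ℤ):ℝ) * lam = ((-(k:ℤ):ℤ):ℝ)*lam + (-lam) := by push_cast; ring
    rw [e, Pi.single_add, ← add_assoc]
    have h2 := hper (x + Pi.single i (((-(k:ℤ):ℤ):ℝ)*lam) + Pi.single i (-lam))
    rw [add_assoc, ← Pi.single_add, neg_add_cancel] at h2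
    simp only [Pi.single_zero, add_zero] at h2
    rw [← h2, ih]

lemma reduce_to_cell {lam1 lam2 : ℝ} (hl1 : 0 < lam1) (hl2 : 0 < lam2)
    {h : (Fin 3 → ℝ) → ℝ}
    (hper1 : ∀ x, h (x + Pi.single 0 lam1) = h x)
    (hper2 : ∀ x, h (x + Pi.single 1 lam2) = h x) (x : Fin 3 → ℝ) :
    ∃ y : Fin 3 → ℝ, (0 ≤ y 0 ∧ y 0 ≤ lam1) ∧ (0 ≤ y 1 ∧ y 1 ≤ lam2) ∧
      y 2 = x 2 ∧ h y = h x := by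
  set n1 : ℤ := -⌊x 0 / lam1⌋ with hn1
  set n2 : ℤ := -⌊x 1 / lam2⌋ with hn2
  refine ⟨x + (Pi.single 0 ((n1:ℝ) * lam1) : Fin 3 → ℝ)
      + (Pi.single 1 ((n2:ℝ) * lam2) : Fin 3 → ℝ), ?_, ?_, by simp, ?_⟩
  · have h1 : (⌊x 0 / lam1⌋ : ℝ) ≤ x 0 / lam1 := Int.floor_le _
    have h2 : x 0 / lam1 < ⌊x 0 / lam1⌋ + 1 := Int.lt_floor_add_one _
    have hx0 : x 0 / lam1 * lam1 = x 0 := div_mul_cancel₀ _ (ne_of_gt hl1)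
    have e : (x + (Pi.single 0 ((n1:ℝ) * lam1) : Fin 3 → ℝ)
        + (Pi.single 1 ((n2:ℝ) * lam2) : Fin 3 → ℝ)) 0 = x 0 + (n1:ℝ) * lam1 := by simp
    rw [e, hn1]
    push_cast
    constructor
    · nlinarith [mul_le_mul_of_nonneg_right h1 hl1.le]
    · nlinarith [mul_le_mul_of_nonneg_right h2.le hl1.le]
  · have h1 : (⌊x 1 / lam2⌋ : ℝ) ≤ x 1 / lam2 := Int.floor_le _
    have h2 : x 1 / lam2 < ⌊x 1 / lam2⌋ + 1 := Int.lt_floor_add_one _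
    have hx0 : x 1 / lam2 * lam2 = x 1 := div_mul_cancel₀ _ (ne_of_gt hl2)
    have e : (x + (Pi.single 0 ((n1:ℝ) * lam1) : Fin 3 → ℝ)
        + (Pi.single 1 ((n2:ℝ) * lam2) : Fin 3 → ℝ)) 1 = x 1 + (n2:ℝ) * lam2 := by simp
    rw [e, hn2]
    push_cast
    constructor
    · nlinarith [mul_le_mul_of_nonneg_right h1 hl2.le]
    · nlinarith [mul_le_mul_of_nonneg_right h2.le hl2.le]
  · rw [per_shift hper2, per_shift hper1]
lemma max_principle {d lam1 lam2 : ℝ} (hd : 0 < d) (hl1 : 0 < lam1) (hl2 : 0 < lam2)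
    {h : (Fin 3 → ℝ) → ℝ} {h' : (Fin 3 → ℝ) → (Fin 3 → ℝ) →L[ℝ] ℝ}
    {h'' : (Fin 3 → ℝ) → (Fin 3 → ℝ) →L[ℝ] ((Fin 3 → ℝ) →L[ℝ] ℝ)}
    (hcont : ContinuousOn h (closure (layer d)))
    (hh' : ∀ x ∈ layer d, HasFDerivAt h (h' x) x)
    (hh'' : ∀ x ∈ layer d, HasFDerivAt h' (h'' x) x)
    (hlap : ∀ x ∈ layer d, ∑ i : Fin 3, h'' x (Pi.single i 1) (Pi.single i 1) = 0)
    (hper1 : ∀ x, h (x + Pi.single 0 lam1) = h x)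
    (hper2 : ∀ x, h (x + Pi.single 1 lam2) = h x)
    (hbc : ∀ x : Fin 3 → ℝ, (x 2 = 0 ∨ x 2 = -d) → h x = 0) :
    ∀ x ∈ closure (layer d), h x ≤ 0 := by
  -- the compact cell
  set K : Set (Fin 3 → ℝ) := {x | (0 ≤ x 0 ∧ x 0 ≤ lam1) ∧ (0 ≤ x 1 ∧ x 1 ≤ lam2) ∧
      (-d ≤ x 2 ∧ x 2 ≤ 0)} with hK
  have hKc : IsCompact K := by
    have : K = Set.pi Set.univ
        (fun i : Fin 3 => (![Set.Icc 0 lam1, Set.Icc 0 lam2, Set.Icc (-d) 0] : Fin 3 → Set ℝ) i) := by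
      ext x
      simp only [hK, Set.mem_setOf_eq, Set.mem_pi, Set.mem_univ, forall_true_left]
      constructor
      · rintro ⟨⟨a1, a2⟩, ⟨b1, b2⟩, c1, c2⟩ i
        fin_cases i <;> simp_all [Set.mem_Icc]
      · intro hx
        have h0 := hx 0; have h1 := hx 1; have h2 := hx 2
        simp [Set.mem_Icc] at h0 h1 h2
        exact ⟨h0, h1, h2⟩
    rw [this]
    apply isCompact_univ_pi
    intro i
    fin_cases i <;> exact isCompact_Icc
  have hKcl : K ⊆ closure (layer d) := by
    intro x hx
    exact mem_closure_layer hd hx.2.2.1 hx.2.2.2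
  have hKne : K.Nonempty := ⟨fun _ => 0, ⟨le_refl 0, hl1.le⟩, ⟨le_refl 0, hl2.le⟩,
      by norm_num [hd.le], le_refl 0⟩
  -- key estimate for each ε
  have key : ∀ ε : ℝ, 0 < ε → ∀ y ∈ closure (layer d), h y ≤ ε * (d/2)^2 := by
    intro ε hε y hy
    set H : (Fin 3 → ℝ) → ℝ := fun x => h x + ε * (x 2 + d/2)^2 with hHdef
    have hHcont : ContinuousOn H (closure (layer d)) := by
      apply hcont.add
      exact (continuous_const.mul (((continuous_apply 2).add continuous_const).pow 2)).continuousOn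
    obtain ⟨p, hpK, hp⟩ := hKc.exists_isMaxOn hKne (hHcont.mono hKcl)
    -- global max over the closure of the layer
    have hglob : ∀ z ∈ closure (layer d), H z ≤ H p := by
      intro z hz
      obtain ⟨y', hy1, hy2, hy3, hy4⟩ := reduce_to_cell hl1 hl2 hper1 hper2 z
      have hz2 := closure_layer_subset d hz
      have hy'K : y' ∈ K := ⟨hy1, hy2, by rw [hy3]; exact hz2.1, by rw [hy3]; exact hz2.2⟩
      have : H y' = H z := by rw [hHdef]; simp only; rw [hy3, hy4]
      rw [← this]
      exact hp hy'K
    by_cases hcase : p 2 = 0 ∨ p 2 = -d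
    · -- boundary case
      have hHp : H p = ε * (d/2)^2 := by
        rw [hHdef]; simp only [hbc p hcase]
        rcases hcase with h1 | h1 <;> rw [h1] <;> ring
      have h1 : h y ≤ H y := by
        rw [hHdef]; simp only; nlinarith [sq_nonneg (y 2 + d/2)]
      calc h y ≤ H y := h1
        _ ≤ H p := hglob y hy
        _ = ε * (d/2)^2 := hHp
    · -- interior max: contradiction
      exfalso
      push_neg at hcase
      have hp2 : -d < p 2 ∧ p 2 < 0 := by
        have := hpK.2.2
        exact ⟨lt_of_le_of_ne this.1 (Ne.symm hcase.2), lt_of_le_of_ne this.2 hcase.1⟩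
      have hpl : p ∈ layer d := hp2
      -- derivative data for H
      set E2 : (Fin 3 → ℝ) →L[ℝ] ℝ := ContinuousLinearMap.proj 2 with hE2
      set H' : (Fin 3 → ℝ) → (Fin 3 → ℝ) →L[ℝ] ℝ :=
        fun x => h' x + (ε * (2 * (x 2 + d/2))) • E2 with hH'
      set Q2 : (Fin 3 → ℝ) →L[ℝ] ((Fin 3 → ℝ) →L[ℝ] ℝ) :=
        ((2:ℝ) • E2).smulRight E2 with hQ2
      set H'' : (Fin 3 → ℝ) → (Fin 3 → ℝ) →L[ℝ] ((Fin 3 → ℝ) →L[ℝ] ℝ) :=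
        fun x => h'' x + ε • Q2 with hH''
      have hQd : ∀ x : Fin 3 → ℝ, HasFDerivAt (fun x : Fin 3 → ℝ => ε * (x 2 + d/2)^2)
          ((ε * (2 * (x 2 + d/2))) • E2) x := by
        intro x
        have h1 : HasFDerivAt (fun x : Fin 3 → ℝ => (x 2 + d/2)^2)
            ((2 * (x 2 + d/2)) • E2) x := by
          have hq : HasDerivAt (fun r : ℝ => (r + d/2)^2) (2 * (x 2 + d/2)) (x 2) := by
            have := ((hasDerivAt_id (x 2)).add_const (d/2)).fun_pow' 2
            simpa [Finset.sum_range_succ, two_mul] using this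
          have hf : HasFDerivAt (fun x : Fin 3 → ℝ => x 2) E2 x := E2.hasFDerivAt
          exact hq.comp_hasFDerivAt x hf
        have := h1.const_mul ε
        simpa [smul_smul] using this
      have hHd : ∀ x ∈ layer d, HasFDerivAt H (H' x) x := by
        intro x hx
        exact (hh' x hx).add (hQd x)
      have hHdd : HasFDerivAt H' (H'' p) p := by
        apply (hh'' p hpl).add
        have h1 : HasFDerivAt (fun x : Fin 3 → ℝ => (ε * (2 * (x 2 + d/2))))
            ((2*ε) • E2) p := by
          have : HasFDerivAt (fun x : Fin 3 → ℝ => x 2) E2 p := E2.hasFDerivAt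
          have h2 := (this.const_mul (2*ε)).add_const (ε * d)
          have e : (fun x : Fin 3 → ℝ => ε * (2 * (x 2 + d/2)))
              = fun x : Fin 3 → ℝ => (2*ε) * x 2 + ε * d := by funext x; ring
          rw [e]
          simpa using h2
        have h2 := h1.smul_const E2
        have e : ((2*ε) • E2).smulRight E2 = ε • Q2 := by
          rw [hQ2]
          ext w v
          simp [ContinuousLinearMap.smulRight_apply]
          ring
        rwa [e] at h2
      -- Laplacian of H at p is positive, so some pure second derivative is positive
      have hlapH : ∑ i : Fin 3, H'' p (Pi.single i 1) (Pi.single i 1) = 2 * ε := by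
        rw [hH'']
        simp only [ContinuousLinearMap.add_apply, ContinuousLinearMap.smul_apply]
        rw [Finset.sum_add_distrib, hlap p hpl, zero_add]
        rw [hQ2]
        simp only [ContinuousLinearMap.smulRight_apply, ContinuousLinearMap.smul_apply,
          smul_eq_mul]
        rw [Fin.sum_univ_three]
        simp only [hE2, ContinuousLinearMap.proj_apply, Pi.single_apply]
        simp [show (2:Fin 3) ≠ 0 from by decide, show (2:Fin 3) ≠ 1 from by decide]
        ring
      have hex : ∃ i : Fin 3, 0 < H'' p (Pi.single i 1) (Pi.single i 1) := by
        by_contra hc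
        push_neg at hc
        have : ∑ i : Fin 3, H'' p (Pi.single i 1) (Pi.single i 1) ≤ 0 :=
          Finset.sum_nonpos (fun i _ => hc i)
        rw [hlapH] at this; nlinarith
      obtain ⟨i, hi⟩ := hex
      set v : Fin 3 → ℝ := Pi.single i 1 with hv
      set γ : ℝ → (Fin 3 → ℝ) := fun t => p + t • v with hγ
      have hγ0 : γ 0 = p := by rw [hγ]; simp
      have hγc : Continuous γ := by rw [hγ]; continuity
      have hγd : ∀ t : ℝ, HasDerivAt γ v t := by
        intro t
        rw [hγ]
        simpa using ((hasDerivAt_id t).smul_const v).const_add p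
      have hev : ∀ᶠ t in nhds (0:ℝ), γ t ∈ layer d := by
        have := hγc.continuousAt (x := 0)
        rw [ContinuousAt, hγ0] at this
        exact this ((isOpen_layer d).mem_nhds hpl)
      set ψ : ℝ → ℝ := fun t => H (γ t) with hψdef
      set ψ' : ℝ → ℝ := fun t => H' (γ t) v with hψ'def
      have hψd : ∀ᶠ t in nhds (0:ℝ), HasDerivAt ψ (ψ' t) t := by
        filter_upwards [hev] with t ht
        exact (hHd (γ t) ht).comp_hasDerivAt t (hγd t)
      have hψdd : HasDerivAt ψ' (H'' p v v) 0 := by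
        have h1 : HasFDerivAt (fun x => H' x v) ((ContinuousLinearMap.apply ℝ ℝ v).comp (H'' p)) p :=
          (ContinuousLinearMap.apply ℝ ℝ v).hasFDerivAt.comp p hHdd
        rw [← hγ0] at h1
        have h2 := h1.comp_hasDerivAt 0 (hγd 0)
        rw [hγ0] at h2
        exact h2
      have hψmax : IsLocalMax ψ 0 := by
        filter_upwards [hev] with t ht
        have := hglob (γ t) (subset_closure ht)
        rw [hψdef]; simp only
        rw [hγ0]
        exact this
      have := second_deriv_test hψd hψdd hψmax
      exact absurd this (not_le.mpr hi)
  -- conclude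
  intro x hx
  by_contra hc
  push_neg at hc
  have hcd : 0 < (d/2)^2 := by positivity
  have := key (h x / (2 * (d/2)^2)) (by positivity) x hx
  rw [div_mul_eq_mul_div, mul_comm] at this
  have e : (d/2)^2 * h x / (2 * (d/2)^2) = h x / 2 := by field_simp
  rw [e] at this
  linarith
lemma vert_const {d : ℝ} (hd : 0 < d) {G : (Fin 3 → ℝ) → ℝ}
    {G' : (Fin 3 → ℝ) → (Fin 3 → ℝ) →L[ℝ] ℝ}
    (hcont : ContinuousOn G (closure (layer d)))
    (hG : ∀ x ∈ layer d, HasFDerivAt G (G' x) x)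
    (hG2 : ∀ x ∈ layer d, G' x (Pi.single 2 1) = 0)
    {x : Fin 3 → ℝ} (hx : x ∈ closure (layer d)) :
    G x = G (x + (-(d/2) - x 2) • (Pi.single 2 1 : Fin 3 → ℝ)) := by
  set v : Fin 3 → ℝ := Pi.single 2 1 with hv
  set γ : ℝ → (Fin 3 → ℝ) := fun t => x + (t - x 2) • v with hγ
  have hγ2 : ∀ t, γ t 2 = t := by intro t; rw [hγ]; simp [hv, Pi.single_apply]
  have hγc : Continuous γ := by rw [hγ]; continuity
  have hγmem : ∀ t ∈ Set.Icc (-d) 0, γ t ∈ closure (layer d) := by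
    intro t ht
    exact mem_closure_layer hd (by rw [hγ2]; exact ht.1) (by rw [hγ2]; exact ht.2)
  have hγmem' : ∀ t ∈ Set.Ioo (-d) 0, γ t ∈ layer d := by
    intro t ht
    exact ⟨by rw [hγ2]; exact ht.1, by rw [hγ2]; exact ht.2⟩
  set ψ : ℝ → ℝ := fun t => G (γ t) with hψ
  have hγd : ∀ t : ℝ, HasDerivAt γ v t := by
    intro t
    rw [hγ]
    have : HasDerivAt (fun t : ℝ => (t - x 2) • v) v t := by
      simpa using (((hasDerivAt_id t).sub_const (x 2)).smul_const v)
    exact this.const_add x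
  have hψd : ∀ t ∈ Set.Ioo (-d) 0, HasDerivAt ψ 0 t := by
    intro t ht
    have h1 := (hG (γ t) (hγmem' t ht)).comp_hasDerivAt t (hγd t)
    rwa [hG2 (γ t) (hγmem' t ht)] at h1
  have hconst : ∀ s ∈ Set.Ioo (-d) 0, ∀ t ∈ Set.Ioo (-d) 0, ψ s = ψ t := by
    intro s hs t ht
    apply (convex_Ioo (-d) 0).is_const_of_fderivWithin_eq_zero
      (fun u hu => ((hψd u hu).differentiableAt.differentiableWithinAt)) ?_ hs ht
    intro u hu
    have h1 : HasFDerivWithinAt ψ ((1 : ℝ →L[ℝ] ℝ).smulRight 0) (Set.Ioo (-d) 0) u :=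
      (hψd u hu).hasFDerivAt.hasFDerivWithinAt
    rw [h1.fderivWithin (isOpen_Ioo.uniqueDiffOn u hu)]
    ext w
    simp
  have hmid : (-(d/2) : ℝ) ∈ Set.Ioo (-d) 0 := by constructor <;> nlinarith
  have hψcont : ContinuousOn ψ (Set.Icc (-d) 0) :=
    hcont.comp hγc.continuousOn hγmem
  have hkey : ∀ t ∈ Set.Icc (-d) 0, ψ t = ψ (-(d/2)) := by
    intro t ht
    by_cases hti : t ∈ Set.Ioo (-d) 0
    · exact hconst t hti _ hmid
    · have hne : t = -d ∨ t = 0 := by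
        rcases ht with ⟨h1, h2⟩
        rcases lt_or_eq_of_le h1 with h1' | h1'
        · rcases lt_or_eq_of_le h2 with h2' | h2'
          · exact absurd ⟨h1', h2'⟩ hti
          · right; exact h2'
        · left; exact h1'.symm
      haveI : (nhdsWithin t (Set.Ioo (-d) 0)).NeBot := by
        refine mem_closure_iff_nhdsWithin_neBot.mp ?_
        rw [closure_Ioo (by linarith : (-d : ℝ) ≠ 0)]
        exact ht
      have h1 : Tendsto ψ (nhdsWithin t (Set.Ioo (-d) 0)) (nhds (ψ t)) :=
        ((hψcont t ht).mono Set.Ioo_subset_Icc_self).tendsto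
      have h2 : Tendsto ψ (nhdsWithin t (Set.Ioo (-d) 0)) (nhds (ψ (-(d/2)))) := by
        apply Tendsto.congr' _ tendsto_const_nhds
        filter_upwards [self_mem_nhdsWithin] with u hu
        exact (hconst u hu _ hmid).symm
      exact tendsto_nhds_unique h1 h2
  have hx2 := closure_layer_subset d hx
  have e1 : γ (x 2) = x := by rw [hγ]; simp
  have e2 : γ (-(d/2)) = x + (-(d/2) - x 2) • v := rfl
  have := hkey (x 2) ⟨hx2.1, hx2.2⟩
  rw [hψ] at this
  simp only at this
  rw [e1] at this
  rw [this, e2]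
section
variable {d : ℝ} {f : (Fin 3 → ℝ) → Fin 3 → ℝ}

/-- first derivatives exist -/
lemma hasFD (hC2 : ContDiffOn ℝ 2 f (layer d)) (j : Fin 3) :
    ∀ x ∈ layer d, HasFDerivAt (fun y => f y j) (fderiv ℝ (fun y => f y j) x) x := by
  intro x hx
  have h1 : ContDiffOn ℝ 2 (fun y => f y j) (layer d) :=
    (ContinuousLinearMap.proj j : ((Fin 3 → ℝ)) →L[ℝ] ℝ).contDiff.comp_contDiffOn hC2
  have h2 := (h1.differentiableOn (by norm_num)).differentiableAt
    ((isOpen_layer d).mem_nhds hx)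
  exact h2.hasFDerivAt

/-- second derivatives exist -/
lemma hasFD2 (hC2 : ContDiffOn ℝ 2 f (layer d)) (j : Fin 3) :
    ∀ x ∈ layer d, HasFDerivAt (fderiv ℝ (fun y => f y j))
      (fderiv ℝ (fderiv ℝ (fun y => f y j)) x) x := by
  intro x hx
  have h1 : ContDiffOn ℝ 2 (fun y => f y j) (layer d) :=
    (ContinuousLinearMap.proj j : ((Fin 3 → ℝ)) →L[ℝ] ℝ).contDiff.comp_contDiffOn hC2
  have h3 : ContDiffOn ℝ 1 (fderiv ℝ (fun y => f y j)) (layer d) :=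
    h1.fderiv_of_isOpen (isOpen_layer d) (by norm_num)
  exact ((h3.differentiableOn (by norm_num)).differentiableAt
    ((isOpen_layer d).mem_nhds hx)).hasFDerivAt

lemma lap_F2 (hC2 : ContDiffOn ℝ 2 f (layer d))
    (hcurl : ∀ x ∈ layer d, curl f x = 0)
    (hdiv : ∀ x ∈ layer d, ∑ j, pd j (fun y => f y j) x = 0) :
    ∀ p ∈ layer d, ∑ i : Fin 3, fderiv ℝ (fderiv ℝ (fun y => f y 2)) p
      (Pi.single i 1) (Pi.single i 1) = 0 := by
  intro p hp
  set U := layer d with hU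
  have hUo : IsOpen U := isOpen_layer d
  set e : Fin 3 → (Fin 3 → ℝ) := fun i => Pi.single i 1 with he
  set D : Fin 3 → (Fin 3 → ℝ) → ((Fin 3 → ℝ) →L[ℝ] ℝ) :=
    fun j => fderiv ℝ (fun y => f y j) with hD
  set S : Fin 3 → ((Fin 3 → ℝ) →L[ℝ] ((Fin 3 → ℝ) →L[ℝ] ℝ)) :=
    fun j => fderiv ℝ (D j) p with hS
  have hUev : U ∈ nhds p := hUo.mem_nhds hp
  -- step 1: evaluation derivatives
  have step1 : ∀ (j : Fin 3) (w : Fin 3 → ℝ), HasFDerivAt (fun x => D j x w)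
      ((ContinuousLinearMap.apply ℝ ℝ w).comp (S j)) p :=
    fun j w => (ContinuousLinearMap.apply ℝ ℝ w).hasFDerivAt.comp p (hasFD2 hC2 j p hp)
  -- curl relations on U
  have hcurl01 : ∀ x ∈ U, D 2 x (e 0) = D 0 x (e 2) := by
    intro x hx
    have h1 := congrFun (hcurl x hx) 1
    simp only [curl, Matrix.cons_val_one, Matrix.head_cons, Pi.zero_apply] at h1
    have : pd 2 (fun y => f y 0) x - pd 0 (fun y => f y 2) x = 0 := h1
    simp only [pd] at this
    rw [hD]; simp only [he]
    linarith
  have hcurl11 : ∀ x ∈ U, D 2 x (e 1) = D 1 x (e 2) := by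
    intro x hx
    have h1 := congrFun (hcurl x hx) 0
    simp only [curl, Matrix.cons_val_zero, Pi.zero_apply] at h1
    have : pd 1 (fun y => f y 2) x - pd 2 (fun y => f y 1) x = 0 := h1
    simp only [pd] at this
    rw [hD]; simp only [he]
    linarith
  -- step 2
  have step2 : ∀ j : Fin 3, j = 0 ∨ j = 1 →
      S 2 (e j) (e j) = S j (e j) (e 2) := by
    intro j hj
    have heq : (fun x => D 2 x (e j)) =ᶠ[nhds p] (fun x => D j x (e 2)) := by
      filter_upwards [hUev] with x hx
      rcases hj with rfl | rfl
      · exact hcurl01 x hx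
      · exact hcurl11 x hx
    have hA : HasFDerivAt (fun x => D j x (e 2))
        ((ContinuousLinearMap.apply ℝ ℝ (e j)).comp (S 2)) p :=
      (step1 2 (e j)).congr_of_eventuallyEq heq.symm
    have := hA.unique (step1 j (e 2))
    have h2 := congrFun (congrArg DFunLike.coe this) (e j)
    simpa using h2
  -- step 3 : symmetry
  have step3 : ∀ (j : Fin 3) (v w : Fin 3 → ℝ), S j v w = S j w v := by
    intro j v w
    apply second_derivative_symmetric_of_eventually (f := fun y => f y j)
      (f' := D j) (x := p)
    · filter_upwards [hUev] with x hx
      exact hasFD hC2 j x hx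
    · exact hasFD2 hC2 j p hp
  -- step 4 : derivative of divergence
  have step4 : ∑ j : Fin 3, S j (e 2) (e j) = 0 := by
    have hdivev : (fun x => ∑ j : Fin 3, D j x (e j)) =ᶠ[nhds p] (fun _ => (0:ℝ)) := by
      filter_upwards [hUev] with x hx
      have := hdiv x hx
      simpa [pd, hD, he] using this
    have hsum : HasFDerivAt (fun x => ∑ j : Fin 3, D j x (e j))
        (∑ j : Fin 3, (ContinuousLinearMap.apply ℝ ℝ (e j)).comp (S j)) p := by
      exact HasFDerivAt.fun_sum (fun j _ => step1 j (e j))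
    have hzero : HasFDerivAt (fun x => ∑ j : Fin 3, D j x (e j))
        (0 : (Fin 3 → ℝ) →L[ℝ] ℝ) p :=
      (hasFDerivAt_const (0:ℝ) p).congr_of_eventuallyEq hdivev
    have := hsum.unique hzero
    have h2 := congrFun (congrArg DFunLike.coe this) (e 2)
    simpa using h2
  -- combine
  have e0 : S 2 (e 0) (e 0) = S 0 (e 2) (e 0) := by
    rw [step2 0 (Or.inl rfl), step3]
  have e1 : S 2 (e 1) (e 1) = S 1 (e 2) (e 1) := by
    rw [step2 1 (Or.inr rfl), step3]
  rw [Fin.sum_univ_three] at step4 ⊢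
  have : fderiv ℝ (fderiv ℝ (fun y => f y 2)) p = S 2 := rfl
  rw [this]
  rw [show (Pi.single (0:Fin 3) (1:ℝ)) = e 0 from rfl, show (Pi.single (1:Fin 3) (1:ℝ)) = e 1 from rfl,
    show (Pi.single (2:Fin 3) (1:ℝ)) = e 2 from rfl]
  rw [e0, e1]
  linarith [step3 2 (e 2) (e 2)]
end
lemma horiz_const {d : ℝ} (hd : 0 < d) {f : (Fin 3 → ℝ) → Fin 3 → ℝ}
    (hC2 : ContDiffOn ℝ 2 f (layer d))
    (hcurl : ∀ x ∈ layer d, curl f x = 0)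
    (hdiv : ∀ x ∈ layer d, ∑ j, pd j (fun y => f y j) x = 0)
    (hD2 : ∀ x ∈ layer d, fderiv ℝ (fun y => f y 2) x = 0)
    (hbdd : ∃ M : ℝ, ∀ x ∈ closure (layer d), ‖f x‖ ≤ M) :
    ∀ z w : ℂ, f ![z.re, z.im, -(d/2)] 0 = f ![w.re, w.im, -(d/2)] 0 ∧
               f ![z.re, z.im, -(d/2)] 1 = f ![w.re, w.im, -(d/2)] 1 := by
  set e : Fin 3 → (Fin 3 → ℝ) := fun i => Pi.single i 1 with he
  set Ls : Fin 3 → (ℂ →L[ℝ] ℝ) := ![Complex.reCLM, Complex.imCLM, 0] with hLs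
  set L : ℂ →L[ℝ] (Fin 3 → ℝ) := ContinuousLinearMap.pi Ls with hL
  set v0 : Fin 3 → ℝ := ![0, 0, -(d/2)] with hv0
  set c : ℂ → (Fin 3 → ℝ) := fun z => L z + v0 with hc
  have hceq : ∀ z : ℂ, c z = ![z.re, z.im, -(d/2)] := by
    intro z
    funext i
    fin_cases i <;>
      simp [hc, hL, hLs, hv0, ContinuousLinearMap.pi_apply, Matrix.vecHead, Matrix.vecTail,
        Function.comp]
  have hmem : ∀ z : ℂ, c z ∈ layer d := by
    intro z
    have : c z 2 = -(d/2) := by rw [hceq]; simp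
    constructor <;> rw [this] <;> nlinarith
  have hcd : ∀ z : ℂ, HasFDerivAt c L z := fun z => (L.hasFDerivAt).add_const v0
  have hL1 : L 1 = e 0 := by
    funext i
    fin_cases i <;> simp [hL, hLs, he, ContinuousLinearMap.pi_apply, Pi.single_apply]
  have hLI : L Complex.I = e 1 := by
    funext i
    fin_cases i <;> simp [hL, hLs, he, ContinuousLinearMap.pi_apply, Pi.single_apply]
  set g : ℂ → ℂ := fun z =>
    (f (c z) 0 : ℂ) + (f (c z) 1) • (-Complex.I) with hg
  set D : Fin 3 → (Fin 3 → ℝ) → ((Fin 3 → ℝ) →L[ℝ] ℝ) :=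
    fun j => fderiv ℝ (fun y => f y j) with hD
  have hgd : ∀ z : ℂ, HasFDerivAt g
      (Complex.ofRealCLM.comp ((D 0 (c z)).comp L) + ((D 1 (c z)).comp L).smulRight (-Complex.I)) z := by
    intro z
    have h0 : HasFDerivAt (fun z => f (c z) 0) ((D 0 (c z)).comp L) z :=
      (hasFD hC2 0 (c z) (hmem z)).comp z (hcd z)
    have h1 : HasFDerivAt (fun z => f (c z) 1) ((D 1 (c z)).comp L) z :=
      (hasFD hC2 1 (c z) (hmem z)).comp z (hcd z)
    exact (Complex.ofRealCLM.hasFDerivAt.comp z h0).add (h1.smul_const (-Complex.I))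
  -- Cauchy-Riemann
  have hCR : ∀ z : ℂ, DifferentiableAt ℂ g z := by
    intro z
    set M : ℂ →L[ℝ] ℂ :=
      Complex.ofRealCLM.comp ((D 0 (c z)).comp L) + ((D 1 (c z)).comp L).smulRight (-Complex.I) with hM
    set a : ℂ := M 1 with ha
    have hcurl3 : D 1 (c z) (e 0) = D 0 (c z) (e 1) := by
      have h1 := congrFun (hcurl (c z) (hmem z)) 2
      simp only [curl, Pi.zero_apply] at h1
      have : pd 0 (fun y => f y 1) (c z) - pd 1 (fun y => f y 0) (c z) = 0 := by
        simpa using h1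
      simp only [pd] at this
      simp only [hD, he]
      linarith
    have hdiv2 : D 0 (c z) (e 0) + D 1 (c z) (e 1) = 0 := by
      have h1 := hdiv (c z) (hmem z)
      rw [Fin.sum_univ_three] at h1
      simp only [pd] at h1
      have h2 : fderiv ℝ (fun y => f y 2) (c z) (Pi.single 2 1) = 0 := by
        rw [hD2 (c z) (hmem z)]; simp
      simp only [hD, he]
      linarith
    have hM1 : M 1 = (D 0 (c z) (e 0) : ℂ) + (D 1 (c z) (e 0)) • (-Complex.I) := by
      simp only [hM, ContinuousLinearMap.add_apply, ContinuousLinearMap.comp_apply,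
        ContinuousLinearMap.smulRight_apply, Complex.ofRealCLM_apply, hL1]
    have hMI' : M Complex.I = (D 0 (c z) (e 1) : ℂ) + (D 1 (c z) (e 1)) • (-Complex.I) := by
      simp only [hM, ContinuousLinearMap.add_apply, ContinuousLinearMap.comp_apply,
        ContinuousLinearMap.smulRight_apply, Complex.ofRealCLM_apply, hLI]
    have hMI : M Complex.I = Complex.I * a := by
      rw [ha, hM1, hMI', ← hcurl3]
      have h2 : D 0 (c z) (e 1) = D 1 (c z) (e 0) := hcurl3.symm
      have h3 : D 1 (c z) (e 1) = -(D 0 (c z) (e 0)) := by linarith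
      rw [h3]
      apply Complex.ext <;>
        simp [Complex.real_smul] <;> ring
    have hlin : ∀ w : ℂ, M w = w * a := by
      intro w
      have hw : w = (w.re : ℝ) • (1:ℂ) + (w.im : ℝ) • Complex.I := by
        simp [Complex.real_smul, Complex.re_add_im]
      rw [hw, map_add, _root_.map_smul, _root_.map_smul, ← ha, hMI]
      simp only [Complex.real_smul]
      ring
    have hrs : (a • (1 : ℂ →L[ℂ] ℂ)).restrictScalars ℝ = M := by
      ext w
      rw [hlin w]
      simp [mul_comm]
    exact ⟨a • (1 : ℂ →L[ℂ] ℂ), hasFDerivAt_of_restrictScalars ℝ (hgd z) hrs⟩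
  -- bounded
  obtain ⟨Mb, hMb⟩ := hbdd
  have hb : Bornology.IsBounded (Set.range g) := by
    rw [Metric.isBounded_iff_subset_closedBall 0]
    refine ⟨2 * Mb, ?_⟩
    rintro _ ⟨z, rfl⟩
    have hmem' : c z ∈ closure (layer d) := subset_closure (hmem z)
    have h0 : |f (c z) 0| ≤ Mb := le_trans (norm_le_pi_norm (f (c z)) 0) (hMb _ hmem')
    have h1 : |f (c z) 1| ≤ Mb := le_trans (norm_le_pi_norm (f (c z)) 1) (hMb _ hmem')
    simp only [Metric.mem_closedBall, dist_zero_right]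
    calc ‖g z‖ ≤ ‖(f (c z) 0 : ℂ)‖ + ‖(f (c z) 1) • (-Complex.I)‖ := norm_add_le _ _
      _ ≤ Mb + Mb := by
          apply add_le_add
          · rwa [Complex.norm_real]
          · rw [norm_smul]
            simp only [norm_neg, Complex.norm_I, mul_one]
            exact h1
      _ = 2 * Mb := by ring
  have hgconst : ∀ z w : ℂ, g z = g w := fun z w =>
    (Differentiable.apply_eq_apply_of_bounded (fun z => hCR z) hb z w)
  intro z w
  have h1 := hgconst z w
  have hre := congrArg Complex.re h1
  have him := congrArg Complex.im h1
  simp only [hg, Complex.add_re, Complex.ofReal_re, Complex.add_im, Complex.ofReal_im,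
    Complex.real_smul, Complex.mul_re, Complex.mul_im, Complex.neg_re, Complex.neg_im,
    Complex.I_re, Complex.I_im, Complex.ofReal_re, Complex.ofReal_im] at hre him
  rw [hceq z, hceq w] at hre him
  constructor
  · simpa using hre
  · have : -(f ![z.re, z.im, -(d/2)] 1) = -(f ![w.re, w.im, -(d/2)] 1) := by
      simpa using him
    linarith
/-- Injectivity of the div-curl operator `C[0]`: a bounded, Λ-periodic,
(+)-symmetric, curl- and divergence-free vector field on the layer
`ℝ² × (−d,0)` with vanishing vertical component on the boundary and zero mean
of the first component over a fundamental domain must vanish identically. -/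
theorem div_curl_injectivity (d lam1 lam2 : ℝ) (hd : 0 < d)
    (hlam1 : 0 < lam1) (hlam2 : 0 < lam2)
    (f : (Fin 3 → ℝ) → Fin 3 → ℝ)
    (hcont : ContinuousOn f (closure (layer d)))
    (hC2 : ContDiffOn ℝ 2 f (layer d))
    (hbdd : ∃ M : ℝ, ∀ x ∈ closure (layer d), ‖f x‖ ≤ M)
    (hper1 : ∀ x, f (x + Pi.single (0 : Fin 3) lam1) = f x)
    (hper2 : ∀ x, f (x + Pi.single (1 : Fin 3) lam2) = f x)
    (hcurl : ∀ x ∈ layer d, curl f x = 0)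
    (hdiv : ∀ x ∈ layer d, ∑ j, pd j (fun y => f y j) x = 0)
    (hbc : ∀ x : Fin 3 → ℝ, (x 2 = 0 ∨ x 2 = -d) → f x 2 = 0)
    (hsym1 : ∀ x, f (refl1 x) = -refl1 (f x))
    (hsym2 : ∀ x, f (refl2 x) = refl2 (f x))
    (hmean : ∫ x in {x : Fin 3 → ℝ |
        x 0 ∈ Set.Ioo 0 lam1 ∧ x 1 ∈ Set.Ioo 0 lam2 ∧ x 2 ∈ Set.Ioo (-d) 0},
        f x 0 = 0) :
    ∀ x ∈ closure (layer d), f x = 0 := by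
  have hcont2 : ContinuousOn (fun x => f x 2) (closure (layer d)) :=
    (continuous_apply 2).comp_continuousOn hcont
  -- Step 1 : the vertical component vanishes identically (maximum principle)
  have hF2z : ∀ x ∈ closure (layer d), f x 2 = 0 := by
    intro x hx
    have hle := max_principle hd hlam1 hlam2 hcont2 (hasFD hC2 2) (hasFD2 hC2 2)
      (lap_F2 hC2 hcurl hdiv)
      (fun x => congrFun (hper1 x) 2) (fun x => congrFun (hper2 x) 2) hbc x hx
    have hge := max_principle hd hlam1 hlam2 (h := fun x => -(f x 2))
      (h' := fun x => -(fderiv ℝ (fun y => f y 2) x))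
      (h'' := fun x => -(fderiv ℝ (fderiv ℝ (fun y => f y 2)) x))
      hcont2.neg
      (fun x hx => (hasFD hC2 2 x hx).neg)
      (fun x hx => (hasFD2 hC2 2 x hx).neg)
      (fun p hp => by
        have h0 := lap_F2 hC2 hcurl hdiv p hp
        simp only [ContinuousLinearMap.neg_apply]
        rw [Finset.sum_neg_distrib, h0, neg_zero])
      (fun x => show -f (x + Pi.single 0 lam1) 2 = -f x 2 by rw [hper1 x])
      (fun x => show -f (x + Pi.single 1 lam2) 2 = -f x 2 by rw [hper2 x])
      (fun x hx => show -f x 2 = 0 by rw [hbc x hx]; ring) x hx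
    simp only [neg_nonpos] at hge
    linarith
  -- Step 2 : vertical derivatives of the horizontal components vanish
  have hD2 : ∀ x ∈ layer d, fderiv ℝ (fun y => f y 2) x = 0 := by
    intro x hx
    have hev : (fun y => f y 2) =ᶠ[nhds x] (fun _ => (0:ℝ)) := by
      filter_upwards [(isOpen_layer d).mem_nhds hx] with y hy
      exact hF2z y (subset_closure hy)
    rw [hev.fderiv_eq]
    exact fderiv_const_apply 0
  have hvert0 : ∀ x ∈ layer d, fderiv ℝ (fun y => f y 0) x (Pi.single 2 1) = 0 := by
    intro x hx
    have h1 := congrFun (hcurl x hx) 1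
    simp only [curl, Matrix.cons_val_one, Matrix.head_cons, Pi.zero_apply] at h1
    have h2 : pd 2 (fun y => f y 0) x - pd 0 (fun y => f y 2) x = 0 := h1
    simp only [pd] at h2
    rw [hD2 x hx] at h2
    simpa using h2
  have hvert1 : ∀ x ∈ layer d, fderiv ℝ (fun y => f y 1) x (Pi.single 2 1) = 0 := by
    intro x hx
    have h1 := congrFun (hcurl x hx) 0
    simp only [curl, Matrix.cons_val_zero, Pi.zero_apply] at h1
    have h2 : pd 1 (fun y => f y 2) x - pd 2 (fun y => f y 1) x = 0 := h1
    simp only [pd] at h2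
    rw [hD2 x hx] at h2
    simpa using h2
  -- Step 3 : reduce to the midplane
  have hmid0 : ∀ x ∈ closure (layer d),
      f x 0 = f (x + (-(d/2) - x 2) • (Pi.single 2 1 : Fin 3 → ℝ)) 0 :=
    fun x hx => vert_const hd ((continuous_apply 0).comp_continuousOn hcont)
      (hasFD hC2 0) hvert0 hx
  have hmid1 : ∀ x ∈ closure (layer d),
      f x 1 = f (x + (-(d/2) - x 2) • (Pi.single 2 1 : Fin 3 → ℝ)) 1 :=
    fun x hx => vert_const hd ((continuous_apply 1).comp_continuousOn hcont)
      (hasFD hC2 1) hvert1 hx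
  have hplane : ∀ x : Fin 3 → ℝ,
      x + (-(d/2) - x 2) • (Pi.single 2 1 : Fin 3 → ℝ) = ![x 0, x 1, -(d/2)] := by
    intro x; funext i; fin_cases i <;> simp [Pi.single_apply]
  have hhc := horiz_const hd hC2 hcurl hdiv hD2 hbdd
  -- the second component vanishes, by the (+)-symmetry
  have hF1z : ∀ x ∈ closure (layer d), f x 1 = 0 := by
    intro x hx
    have h1 := hmid1 x hx
    rw [hplane] at h1
    have h2 := (hhc ⟨x 0, x 1⟩ ⟨0, x 1⟩).2
    simp only [] at h2
    set p' : Fin 3 → ℝ := ![0, x 1, -(d/2)] with hp'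
    have hfix : refl1 p' = p' := by
      funext i; fin_cases i <;> simp [refl1, hp']
    have h3 := congrFun (hsym1 p') 1
    rw [hfix] at h3
    have h4 : f p' 1 = -(f p' 1) := by
      simpa [refl1] using h3
    have h5 : f p' 1 = 0 := by linarith
    rw [h1]
    calc f ![x 0, x 1, -(d/2)] 1 = f p' 1 := h2
      _ = 0 := h5
  -- the first component is constant
  have hc0 : ∀ x ∈ closure (layer d), f x 0 = f ![(0:ℝ), 0, -(d/2)] 0 := by
    intro x hx
    rw [hmid0 x hx, hplane]
    have h2 := (hhc ⟨x 0, x 1⟩ 0).1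
    simpa using h2
  -- and the constant is zero by the mean condition
  set S₀ : Set (Fin 3 → ℝ) := {x : Fin 3 → ℝ |
      x 0 ∈ Set.Ioo 0 lam1 ∧ x 1 ∈ Set.Ioo 0 lam2 ∧ x 2 ∈ Set.Ioo (-d) 0} with hS₀
  have hS₀pi : S₀ = Set.pi Set.univ
      (fun i : Fin 3 => (![Set.Ioo 0 lam1, Set.Ioo 0 lam2, Set.Ioo (-d) 0] : Fin 3 → Set ℝ) i) := by
    ext x
    simp only [hS₀, Set.mem_setOf_eq, Set.mem_pi, Set.mem_univ, forall_true_left]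
    constructor
    · rintro ⟨a, b, c⟩ i
      fin_cases i <;> simpa
    · intro hx
      exact ⟨hx 0, hx 1, hx 2⟩
  have hmeas : MeasurableSet S₀ := by
    rw [hS₀pi]
    apply MeasurableSet.univ_pi
    intro i
    fin_cases i <;> exact measurableSet_Ioo
  have hsub : S₀ ⊆ closure (layer d) :=
    fun x hx => mem_closure_layer hd hx.2.2.1.le hx.2.2.2.le
  set c₀ : ℝ := f ![(0:ℝ), 0, -(d/2)] 0 with hc₀def
  have hint : ∫ x in S₀, f x 0 = ∫ _x in S₀, c₀ :=
    setIntegral_congr_fun hmeas (fun x hx => hc0 x (hsub hx))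
  have hvol : (volume S₀).toReal = lam1 * lam2 * d := by
    rw [hS₀pi, volume_pi_pi]
    rw [Fin.prod_univ_three]
    simp only [Matrix.cons_val_zero, Matrix.cons_val_one, Matrix.head_cons,
      Matrix.cons_val_two, Matrix.tail_cons, Real.volume_Ioo]
    rw [show lam1 - 0 = lam1 by ring, show lam2 - 0 = lam2 by ring,
      show (0 : ℝ) - -d = d by ring]
    rw [← ENNReal.ofReal_mul hlam1.le, ← ENNReal.ofReal_mul (by positivity)]
    rw [ENNReal.toReal_ofReal (by positivity)]
  have hczero : c₀ = 0 := by
    have h1 : (0:ℝ) = (lam1 * lam2 * d) * c₀ := by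
      rw [← hmean, hint, setIntegral_const, measureReal_def, hvol, smul_eq_mul]
    have h2 : (0:ℝ) < lam1 * lam2 * d := by positivity
    by_contra hc
    rcases lt_or_gt_of_ne hc with h | h <;> nlinarith
  -- conclusion
  intro x hx
  funext i
  fin_cases i
  · show f x 0 = 0
    rw [hc0 x hx]
    exact hczero
  · show f x 1 = 0
    exact hF1z x hx
  · show f x 2 = 0
    exact hF2z x hx
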